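/- Let V be a real inner product space, u_1, …, u_N ∈ V snapshot vectors, and C ∈ ℝ^{N×N} the Gram matrix C_{ij} = ⟨u_i, u_j⟩. Let q_1, …, q_N be an orthonormal basis of ℝ^N of eigenvectors of C with eigenvalues λ_1 ≥ λ_2 ≥ … ≥ λ_N ≥ 0, and for λ_i > 0 set φ_i := λ_i^{-1/2} Σ_n (q_i)_n u_n. For 1 ≤ r ≤ N let P_r denote the orthogonal projection of V onto span{φ_1, …, φ_r}. Then the total squared reconstruction error of the snapshots equals the sum of the discarded eigenvalues: Σ_{n=1}^{N} ‖u_n − P_r u_n‖² = Σ_{i=r+1}^{N} λ_i. -/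

import Mathlib

open scoped RealInnerProductSpace Matrix

open Finset

/-!
The unnormalised modes `wᵢ = ∑ₙ (qᵢ)ₙ uₙ` satisfy `⟪uₙ, wᵢ⟫ = λᵢ (qᵢ)ₙ` and `⟪wᵢ, wⱼ⟫ = λᵢ δᵢⱼ`;
in particular `λᵢ = ‖wᵢ‖² ≥ 0` and the POD modes are pairwise orthogonal. Projecting `v` onto
the span of an orthogonal family removes `∑ᵢ ⟪v, φᵢ⟫² / ‖φᵢ‖²` from `‖v‖²`, which for `v = uₙ`
is `∑_{i<r} λᵢ (qᵢ)ₙ²`. Summing over `n` with `∑ₙ (qᵢ)ₙ² = 1` and `∑ₙ ‖uₙ‖² = tr C = ∑ᵢ λᵢ`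
leaves the discarded eigenvalues.
-/

theorem Matrix.trace_eq_sum_of_orthonormal_eigenvectors {n R : Type*} [Fintype n]
    [DecidableEq n] [CommRing R] (A : Matrix n n R) (q : n → n → R) (lam : n → R)
    (heig : ∀ i, A *ᵥ q i = lam i • q i) (horth : ∀ i j, q i ⬝ᵥ q j = if i = j then 1 else 0) :
    A.trace = ∑ i, lam i := by
  set Q : Matrix n n R := Matrix.of q
  have hQQt : Q * Qᵀ = 1 := by
    ext i j
    simpa [Q, Matrix.mul_apply, dotProduct, Matrix.one_apply] using horth i j
  have hAQt : A * Qᵀ = Qᵀ * Matrix.diagonal lam := by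
    ext i j
    rw [Matrix.mul_diagonal]
    simpa [Q, Matrix.mulVec, dotProduct, Matrix.mul_apply, mul_comm] using
      congrFun (heig j) i
  calc A.trace = (A * (Qᵀ * Q)).trace := by rw [mul_eq_one_comm.mp hQQt, Matrix.mul_one]
    _ = (Q * Qᵀ * Matrix.diagonal lam).trace := by
      rw [← Matrix.mul_assoc, hAQt, Matrix.trace_mul_comm, ← Matrix.mul_assoc]
    _ = ∑ i, lam i := by rw [hQQt, Matrix.one_mul, Matrix.trace_diagonal]

section Projection

variable {V ι : Type*} [NormedAddCommGroup V] [InnerProductSpace ℝ V]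

/-- Zero vectors of the family contribute `0 / 0 = 0`. -/
theorem norm_sub_sq_eq_sub_sum_of_orthogonal_family (s : Finset ι) (e : ι → V)
    (he : ∀ i ∈ s, ∀ j ∈ s, i ≠ j → ⟪e i, e j⟫ = 0) {v p : V}
    (hp : p ∈ Submodule.span ℝ (e '' s))
    (hvp : ∀ w ∈ Submodule.span ℝ (e '' s), ⟪v - p, w⟫ = 0) :
    ‖v - p‖ ^ 2 = ‖v‖ ^ 2 - ∑ i ∈ s, ⟪v, e i⟫ ^ 2 / ‖e i‖ ^ 2 := by
  obtain ⟨c, rfl⟩ := (Submodule.mem_span_image_finset_iff_exists_fun' ℝ).mp hp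
  have hcoeff : ∀ j ∈ s, ⟪v, e j⟫ = c j * ‖e j‖ ^ 2 := by
    intro j hj
    have h := hvp (e j) (Submodule.subset_span ⟨j, hj, rfl⟩)
    rw [inner_sub_left, sum_inner, sum_eq_single_of_mem j hj fun i hi hij => by
      rw [real_inner_smul_left, he i hi j hj hij, mul_zero]] at h
    rw [real_inner_smul_left, real_inner_self_eq_norm_sq] at h
    linarith
  have hpyth : ‖v - ∑ i ∈ s, c i • e i‖ ^ 2 = ‖v‖ ^ 2 - ⟪∑ i ∈ s, c i • e i, v⟫ := by
    rw [← real_inner_self_eq_norm_sq, inner_sub_right, hvp _ hp, sub_zero, inner_sub_left,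
      real_inner_self_eq_norm_sq]
  rw [hpyth, sum_inner]
  congr 1
  refine sum_congr rfl fun i hi => ?_
  rw [real_inner_smul_left, real_inner_comm, hcoeff i hi]
  rcases eq_or_ne ‖e i‖ 0 with h | h
  · simp [h]
  · field_simp

end Projection

section Snapshots

variable {V ι : Type*} [NormedAddCommGroup V] [InnerProductSpace ℝ V] [Fintype ι]
  {u : ι → V} {C : Matrix ι ι ℝ}

theorem inner_sum_smul_eq_mulVec (hC : ∀ i j, C i j = ⟪u i, u j⟫) (n : ι) (y : ι → ℝ) :
    ⟪u n, ∑ m, y m • u m⟫ = (C *ᵥ y) n := by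
  simp [inner_sum, real_inner_smul_right, Matrix.mulVec, dotProduct, hC, mul_comm]

theorem inner_sum_smul_sum_smul (hC : ∀ i j, C i j = ⟪u i, u j⟫) (x y : ι → ℝ) :
    ⟪∑ n, x n • u n, ∑ m, y m • u m⟫ = x ⬝ᵥ (C *ᵥ y) := by
  simp [sum_inner, real_inner_smul_left, inner_sum_smul_eq_mulVec hC, dotProduct]

theorem sum_norm_sq_eq_trace (hC : ∀ i j, C i j = ⟪u i, u j⟫) : ∑ n, ‖u n‖ ^ 2 = C.trace := by
  simp [Matrix.trace, hC]

/-- Vanishes when `lam i = 0`, since `(√0)⁻¹ = 0`. -/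
noncomputable def podMode (u : ι → V) (q : ι → ι → ℝ) (lam : ι → ℝ) (i : ι) : V :=
  (Real.sqrt (lam i))⁻¹ • ∑ n, q i n • u n

variable [DecidableEq ι] {q : ι → ι → ℝ} {lam : ι → ℝ}

theorem inner_sum_smul_eigenvectors_eq_ite (hC : ∀ i j, C i j = ⟪u i, u j⟫)
    (heig : ∀ i, C *ᵥ q i = lam i • q i)
    (horth : ∀ i j, q i ⬝ᵥ q j = if i = j then 1 else 0) (i j : ι) :
    ⟪∑ n, q i n • u n, ∑ n, q j n • u n⟫ = if i = j then lam i else 0 := by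
  rw [inner_sum_smul_sum_smul hC, heig, dotProduct_smul, horth, smul_eq_mul]
  split_ifs with h <;> simp [h]

theorem eigenvalue_nonneg_of_gram (hC : ∀ i j, C i j = ⟪u i, u j⟫)
    (heig : ∀ i, C *ᵥ q i = lam i • q i)
    (horth : ∀ i j, q i ⬝ᵥ q j = if i = j then 1 else 0) (i : ι) :
    0 ≤ lam i := by
  have h := real_inner_self_nonneg (x := ∑ n, q i n • u n)
  rwa [inner_sum_smul_eigenvectors_eq_ite hC heig horth, if_pos rfl] at h

theorem inner_podMode_of_ne (hC : ∀ i j, C i j = ⟪u i, u j⟫)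
    (heig : ∀ i, C *ᵥ q i = lam i • q i)
    (horth : ∀ i j, q i ⬝ᵥ q j = if i = j then 1 else 0) {i j : ι} (h : i ≠ j) :
    ⟪podMode u q lam i, podMode u q lam j⟫ = 0 := by
  simp [podMode, real_inner_smul_left, real_inner_smul_right,
    inner_sum_smul_eigenvectors_eq_ite hC heig horth, h]

theorem inner_podMode_sq_div_norm_sq (hC : ∀ i j, C i j = ⟪u i, u j⟫)
    (heig : ∀ i, C *ᵥ q i = lam i • q i)
    (horth : ∀ i j, q i ⬝ᵥ q j = if i = j then 1 else 0) (n i : ι) :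
    ⟪u n, podMode u q lam i⟫ ^ 2 / ‖podMode u q lam i‖ ^ 2 = lam i * q i n ^ 2 := by
  have hinner : ⟪u n, podMode u q lam i⟫ = (Real.sqrt (lam i))⁻¹ * (lam i * q i n) := by
    simp [podMode, real_inner_smul_right, inner_sum_smul_eq_mulVec hC, heig]
  have hnorm : ‖podMode u q lam i‖ ^ 2 = (Real.sqrt (lam i))⁻¹ ^ 2 * lam i := by
    rw [← real_inner_self_eq_norm_sq, podMode, real_inner_smul_left, real_inner_smul_right,
      inner_sum_smul_eigenvectors_eq_ite hC heig horth, if_pos rfl]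
    ring
  rcases (eigenvalue_nonneg_of_gram hC heig horth i).eq_or_lt with h | h
  · simp [hinner, ← h]
  · rw [hinner, hnorm]
    field_simp

end Snapshots

theorem pod_truncation_error_eq_tail_eigenvalues_general
    {V : Type*} [NormedAddCommGroup V] [InnerProductSpace ℝ V]
    (N : ℕ) (u : Fin N → V)
    (C : Matrix (Fin N) (Fin N) ℝ)
    (hC : ∀ i j, C i j = ⟪u i, u j⟫)
    (q : Fin N → (Fin N → ℝ)) (lam : Fin N → ℝ)
    (heig : ∀ i, C.mulVec (q i) = lam i • q i)
    (horth : ∀ i j, q i ⬝ᵥ q j = if i = j then (1 : ℝ) else 0)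
    (φ : Fin N → V)
    (hφ : ∀ i, φ i = (Real.sqrt (lam i))⁻¹ • ∑ n, q i n • u n)
    (r : ℕ)
    -- `P` is the orthogonal projection of `V` onto `span {φ_1, …, φ_r}`:
    (P : V → V)
    (hPmem : ∀ v, P v ∈ Submodule.span ℝ (φ '' {i : Fin N | (i : ℕ) < r}))
    (hPorth : ∀ v, ∀ w ∈ Submodule.span ℝ (φ '' {i : Fin N | (i : ℕ) < r}),
      ⟪v - P v, w⟫ = 0) :
    ∑ n, ‖u n - P (u n)‖ ^ 2 =
      ∑ i ∈ Finset.univ.filter (fun i : Fin N => r ≤ (i : ℕ)), lam i := by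
  obtain rfl : φ = podMode u q lam := funext hφ
  set F := univ.filter fun i : Fin N => (i : ℕ) < r
  have hF : {i : Fin N | (i : ℕ) < r} = F := by simp [F]
  rw [hF] at hPmem hPorth
  have herr (n : Fin N) : ‖u n - P (u n)‖ ^ 2 = ‖u n‖ ^ 2 - ∑ i ∈ F, lam i * q i n ^ 2 := by
    rw [norm_sub_sq_eq_sub_sum_of_orthogonal_family F _
      (fun i _ j _ => inner_podMode_of_ne hC heig horth) (hPmem _) (hPorth _)]
    simp only [inner_podMode_sq_div_norm_sq hC heig horth]
  have hunit (i : Fin N) : ∑ n, q i n ^ 2 = 1 := by simpa [dotProduct, sq] using horth i i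
  calc ∑ n, ‖u n - P (u n)‖ ^ 2 = ∑ i, lam i - ∑ i ∈ F, lam i := by
        simp only [herr, sum_sub_distrib, sum_norm_sq_eq_trace hC,
          C.trace_eq_sum_of_orthonormal_eigenvectors q lam heig horth]
        rw [sum_comm]
        simp [← mul_sum, hunit]
    _ = ∑ i ∈ univ.filter fun i : Fin N => r ≤ (i : ℕ), lam i := by
        rw [← sum_filter_add_sum_filter_not univ fun i : Fin N => (i : ℕ) < r]
        simp [F, not_lt]

/-- With eigenvalues of the snapshot Gram matrix sorted in decreasing order and POD modes
`φ i = λ i ^ (-1/2) • ∑ n, (q i) n • u n` (which vanish for zero eigenvalues), the total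
squared error of orthogonally projecting the snapshots onto the span of the first `r`
POD modes equals the sum of the discarded eigenvalues `λ_{r+1} + ⋯ + λ_N`. -/
theorem pod_truncation_error_eq_tail_eigenvalues
    {V : Type*} [NormedAddCommGroup V] [InnerProductSpace ℝ V]
    (N : ℕ) (u : Fin N → V)
    (C : Matrix (Fin N) (Fin N) ℝ)
    (hC : ∀ i j, C i j = ⟪u i, u j⟫)
    (q : Fin N → (Fin N → ℝ)) (lam : Fin N → ℝ)
    (hnonneg : ∀ i, 0 ≤ lam i)
    (hsorted : ∀ i j : Fin N, i ≤ j → lam j ≤ lam i)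
    (heig : ∀ i, C.mulVec (q i) = lam i • q i)
    (horth : ∀ i j, q i ⬝ᵥ q j = if i = j then (1 : ℝ) else 0)
    (φ : Fin N → V)
    (hφ : ∀ i, φ i = (Real.sqrt (lam i))⁻¹ • ∑ n, q i n • u n)
    (r : ℕ) (hr1 : 1 ≤ r) (hrN : r ≤ N)
    -- `P` is the orthogonal projection of `V` onto `span {φ_1, …, φ_r}`:
    (P : V → V)
    (hPmem : ∀ v, P v ∈ Submodule.span ℝ (φ '' {i : Fin N | (i : ℕ) < r}))
    (hPorth : ∀ v, ∀ w ∈ Submodule.span ℝ (φ '' {i : Fin N | (i : ℕ) < r}),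
      ⟪v - P v, w⟫ = 0) :
    ∑ n, ‖u n - P (u n)‖ ^ 2 =
      ∑ i ∈ Finset.univ.filter (fun i : Fin N => r ≤ (i : ℕ)), lam i :=
  pod_truncation_error_eq_tail_eigenvalues_general N u C hC q lam heig horth φ hφ r P hPmem hPorth
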